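/- arXiv:2312.14593 — 6 statements merged into one kernel-verified Lean document; each statement's English description precedes it below -/
import Mathlib

section
/- Let G be a finite simple graph, k ≥ 2 an integer, and u a vertex of G. Let V₂ = N(u) and V₃ = V(G) ∖ N[u], and let G_u be the simple graph on vertex set V₂ ∪ V₃ whose edges are all edges of G between vertices of V₂ ∪ V₃ together with all pairs of distinct vertices of V₂. Suppose that the induced subgraph G[V₃] has no dominating set of cardinality k − 1. Then G_u has a dominating set of cardinality k − 1 if and only if G has a dominating set of cardinality k that contains u. -/
/-- The graph `G_u` on vertex set `V₂ ∪ V₃ = V ∖ {u}` (where `V₂ = N(u)`,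
`V₃ = V ∖ N[u]`), whose edges are all edges of `G` between vertices of `V₂ ∪ V₃`
together with all pairs of distinct vertices of `V₂`. -/
def Gu {V : Type*} (G : SimpleGraph V) (u : V) : SimpleGraph V :=
  SimpleGraph.fromRel (fun a b => a ≠ u ∧ b ≠ u ∧ (G.Adj a b ∨ (G.Adj u a ∧ G.Adj u b)))

/-!
Passing between `S ∪ {u}` and `S`: a vertex of `V₂` dominated by `u` in `G` is dominated in `G_u`
by any vertex of `S` in `V₂`, since `V₂` is a clique there. If `S` has no vertex in `V₂`, then `u`
dominates nothing in `V₃`, so `S` alone dominates `G[V₃]`, which the hypothesis excludes.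
-/

open Finset

section

variable {V : Type*} (G : SimpleGraph V)

def DominatesOn (S : Finset V) (W : Set V) : Prop :=
  ∀ v ∈ W, ∃ s ∈ S, v = s ∨ G.Adj s v

variable {G}

theorem Gu_adj_iff {u a b : V} :
    (Gu G u).Adj a b ↔ a ≠ b ∧ a ≠ u ∧ b ≠ u ∧ (G.Adj a b ∨ (G.Adj u a ∧ G.Adj u b)) := by
  simp only [Gu, SimpleGraph.fromRel_adj, G.adj_comm b a]
  tauto

theorem DominatesOn.insert_of_Gu [DecidableEq V] {S : Finset V} {u : V}
    (hS : DominatesOn (Gu G u) S {u}ᶜ) : DominatesOn G (insert u S) Set.univ := by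
  intro v _
  by_cases hvu : v = u
  · exact ⟨u, mem_insert_self u S, Or.inl hvu⟩
  obtain ⟨s, hs, rfl | hsv⟩ := hS v hvu
  · exact ⟨v, mem_insert_of_mem hs, Or.inl rfl⟩
  rcases (Gu_adj_iff.mp hsv).2.2.2 with hsv | ⟨-, huv⟩
  · exact ⟨s, mem_insert_of_mem hs, Or.inr hsv⟩
  · exact ⟨u, mem_insert_self u S, Or.inr huv⟩

theorem DominatesOn.Gu_erase [DecidableEq V] {S : Finset V} {u w : V}
    (hS : DominatesOn G S Set.univ) (hw : w ∈ S.erase u) (huw : G.Adj u w) :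
    DominatesOn (Gu G u) (S.erase u) {u}ᶜ := by
  intro v hvu
  obtain ⟨s, hs, hsv⟩ := hS v trivial
  by_cases hsu : s = u
  · subst hsu
    have huv : G.Adj s v := hsv.resolve_left hvu
    by_cases hwv : w = v
    · exact ⟨w, hw, Or.inl hwv.symm⟩
    · exact ⟨w, hw, Or.inr (Gu_adj_iff.mpr ⟨hwv, ne_of_mem_erase hw, hvu, Or.inr ⟨huw, huv⟩⟩)⟩
  refine ⟨s, mem_erase.mpr ⟨hsu, hs⟩, ?_⟩
  by_cases hsv' : v = s
  · exact Or.inl hsv'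
  · exact Or.inr (Gu_adj_iff.mpr ⟨Ne.symm hsv', hsu, hvu, Or.inl (hsv.resolve_left hsv')⟩)

theorem DominatesOn.erase [DecidableEq V] {S : Finset V} {W : Set V} {u : V}
    (hS : DominatesOn G S W) (hu : ∀ v ∈ W, v ≠ u ∧ ¬ G.Adj u v) :
    DominatesOn G (S.erase u) W := by
  intro v hv
  obtain ⟨s, hs, hsv⟩ := hS v hv
  have hsu : s ≠ u := by
    rintro rfl
    rcases hsv with rfl | hsv
    exacts [(hu v hv).1 rfl, (hu v hv).2 hsv]
  exact ⟨s, mem_erase.mpr ⟨hsu, hs⟩, hsv⟩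

end

theorem stmt2_general {V : Type*} (G : SimpleGraph V) (k : ℕ) (hk : 2 ≤ k) (u : V)
    (hV3 : ¬ ∃ S : Finset V, (∀ s ∈ S, s ≠ u ∧ ¬ G.Adj u s) ∧ S.card = k - 1 ∧
      ∀ v : V, v ≠ u → ¬ G.Adj u v → ∃ s ∈ S, v = s ∨ G.Adj s v) :
    (∃ S : Finset V, (∀ s ∈ S, s ≠ u) ∧ S.card = k - 1 ∧
        ∀ v : V, v ≠ u → ∃ s ∈ S, v = s ∨ (Gu G u).Adj s v) ↔
      (∃ S : Finset V, S.card = k ∧ u ∈ S ∧ ∀ v : V, ∃ s ∈ S, v = s ∨ G.Adj s v) := by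
  classical
  constructor
  · rintro ⟨S, hSu, hcard, hdom⟩
    have huS : u ∉ S := fun h => hSu u h rfl
    refine ⟨insert u S, by rw [card_insert_of_notMem huS, hcard]; omega, mem_insert_self u S,
      fun v => DominatesOn.insert_of_Gu hdom v trivial⟩
  · rintro ⟨S, hcard, huS, hdom⟩
    have hS : DominatesOn G S Set.univ := fun v _ => hdom v
    have hSV3 : DominatesOn G S {v | v ≠ u ∧ ¬ G.Adj u v} := fun v _ => hdom v
    have hcard' : (S.erase u).card = k - 1 := by rw [card_erase_of_mem huS, hcard]
    by_cases hV2 : ∃ w ∈ S.erase u, G.Adj u w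
    · obtain ⟨w, hw, huw⟩ := hV2
      exact ⟨S.erase u, fun s hs => ne_of_mem_erase hs, hcard', hS.Gu_erase hw huw⟩
    · push Not at hV2
      have hV3dom := hSV3.erase fun v hv => hv
      exact (hV3 ⟨S.erase u, fun s hs => ⟨ne_of_mem_erase hs, hV2 s hs⟩, hcard',
        fun v hvu huv => hV3dom v ⟨hvu, huv⟩⟩).elim

/-- Assuming `G[V₃]` has no dominating set of cardinality `k − 1`, the graph `G_u` has a
dominating set of cardinality `k − 1` iff `G` has a dominating set of cardinality `k`
containing `u`. -/
theorem stmt2 {V : Type*} [Fintype V] (G : SimpleGraph V) (k : ℕ) (hk : 2 ≤ k) (u : V)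
    (hV3 : ¬ ∃ S : Finset V, (∀ s ∈ S, s ≠ u ∧ ¬ G.Adj u s) ∧ S.card = k - 1 ∧
      ∀ v : V, v ≠ u → ¬ G.Adj u v → ∃ s ∈ S, v = s ∨ G.Adj s v) :
    (∃ S : Finset V, (∀ s ∈ S, s ≠ u) ∧ S.card = k - 1 ∧
        ∀ v : V, v ≠ u → ∃ s ∈ S, v = s ∨ (Gu G u).Adj s v) ↔
      (∃ S : Finset V, S.card = k ∧ u ∈ S ∧ ∀ v : V, ∃ s ∈ S, v = s ∨ G.Adj s v) :=
  stmt2_general G k hk u hV3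
end

section
/- Let k ≥ 1, ℓ ≥ 2, d ≥ 1, n ≥ 1 be integers and let A₁, …, A_k be sets, each consisting of n binary vectors of dimension d (vectors a^i_1, …, a^i_n ∈ {0,1}^d for each i). Construct the finite simple graph G as follows: for each i ∈ [k] and j ∈ [n] there is a vertex a^i_j; for each i ∈ [k] there is a hub vertex A_i adjacent to a^i_1, …, a^i_n, together with a path of ℓ − 1 new vertices attached to A_i, whose endpoint farthest from A_i is labelled v_i; for each t ∈ [d] there is a vertex D_t, adjacent to a^i_j if and only if a^i_j[t] = 0, together with a path of ℓ − 1 new vertices attached to D_t, whose endpoint farthest from D_t is labelled w_t; there are no other edges. Then G has a k-dominating set at distance ℓ if and only if there exist vectors a₁ ∈ A₁, …, a_k ∈ A_k such that for every coordinate t ∈ [d] at least one of a₁[t], …, a_k[t] equals 0. -/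
/-!
A walk of length at most `ℓ` ending at `v_i` can only start on the branch of `A_i` (a vector
`a^i_j`, the hub `A_i` or its path), and the `k` branches are disjoint, so a `k`-dominating set
at distance `ℓ` has exactly one vertex on each branch. A walk of length at most `ℓ` ending at
`w_t` can only start at `D_t`, on its path, or at a vector whose `t`-th coordinate is `0`; as
every vertex of the dominating set lies on a branch, the vertex reaching `w_t` is some `a^i_j`
with `a^i_j[t] = 0`. Both length bounds come from potentials that change by at most one along
every edge.

Conversely, the vectors `a^i_{f i}` reach every hub and every `a^i_j` within two steps, every
`D_t` in one step when some `a^i_{f i}[t] = 0`, and so every path vertex within `ℓ` steps.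
-/

/-- Vertices of the reduction graph for `k`-dominating set at distance `ℓ`:
vector vertices `a^i_j`, hub vertices `A_i`, path vertices attached to each hub
(the endpoint farthest from `A_i` is `v_i`), dimension vertices `D_t`, and path
vertices attached to each `D_t` (the endpoint farthest from `D_t` is `w_t`). -/
inductive OVVert (k n d ℓ : ℕ) : Type
  | vec : Fin k → Fin n → OVVert k n d ℓ
  | hub : Fin k → OVVert k n d ℓ
  | hpath : Fin k → Fin (ℓ - 1) → OVVert k n d ℓ
  | dim : Fin d → OVVert k n d ℓ
  | dpath : Fin d → Fin (ℓ - 1) → OVVert k n d ℓ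

/-- The reduction graph: `a^i_j` is adjacent to the hub `A_i`; `a^i_j` is adjacent to `D_t`
iff the `t`-th coordinate of the vector `a^i_j` is `0` (here `false`); a path of `ℓ − 1`
new vertices is attached to each hub `A_i` and each dimension vertex `D_t`;
there are no other edges. -/
def OVGraph (k n d ℓ : ℕ) (a : Fin k → Fin n → Fin d → Bool) :
    SimpleGraph (OVVert k n d ℓ) :=
  SimpleGraph.fromRel (fun x y =>
    match x, y with
    | .vec i _, .hub i' => i = i'
    | .vec i j, .dim t => a i j t = false
    | .hub i, .hpath i' p => i = i' ∧ p.val = 0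
    | .hpath i p, .hpath i' q => i = i' ∧ q.val = p.val + 1
    | .dim t, .dpath t' p => t = t' ∧ p.val = 0
    | .dpath t p, .dpath t' q => t = t' ∧ q.val = p.val + 1
    | _, _ => False)

namespace SimpleGraph

variable {V : Type*}

theorem le_add_one_of_fromRel_adj {r : V → V → Prop} {φ : V → ℕ}
    (h : ∀ x y, r x y → φ x ≤ φ y + 1 ∧ φ y ≤ φ x + 1) {x y : V}
    (hxy : (fromRel r).Adj x y) : φ x ≤ φ y + 1 := by
  rcases hxy.2 with hr | hr
  · exact (h x y hr).1
  · exact (h y x hr).2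

theorem Walk.le_add_length_of_adj_le {G : SimpleGraph V} {φ : V → ℕ}
    (h : ∀ x y, G.Adj x y → φ x ≤ φ y + 1) {u v : V} (w : G.Walk u v) :
    φ u ≤ φ v + w.length := by
  induction w with
  | nil => simp
  | cons hadj _ ih =>
    have := h _ _ hadj
    rw [Walk.length_cons]
    omega

end SimpleGraph

namespace OVVert

variable {k n d ℓ : ℕ}

def IsOnBranch (i : Fin k) : OVVert k n d ℓ → Prop
  | vec i' _ | hub i' | hpath i' _ => i' = i
  | dim _ | dpath _ _ => False

theorem IsOnBranch.unique {s : OVVert k n d ℓ} {i i' : Fin k} (h : s.IsOnBranch i)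
    (h' : s.IsOnBranch i') : i = i' := by
  cases s <;> simp only [IsOnBranch] at h h' <;> exact h ▸ h'

def vecIndex (j₀ : Fin n) : OVVert k n d ℓ → Fin n
  | vec _ j => j
  | _ => j₀

end OVVert

namespace OVGraph

open OVVert SimpleGraph

variable {k n d ℓ : ℕ} (a : Fin k → Fin n → Fin d → Bool)

theorem adj_vec_hub (i : Fin k) (j : Fin n) : (OVGraph k n d ℓ a).Adj (vec i j) (hub i) := by
  simp [OVGraph]

theorem adj_vec_dim {i : Fin k} {j : Fin n} {t : Fin d} (h : a i j t = false) :
    (OVGraph k n d ℓ a).Adj (vec i j) (dim t) := by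
  simp [OVGraph, h]

theorem adj_hub_hpath_zero (i : Fin k) (h : 0 < ℓ - 1) :
    (OVGraph k n d ℓ a).Adj (hub i) (hpath i ⟨0, h⟩) := by
  simp [OVGraph]

theorem adj_hpath_succ (i : Fin k) {q : ℕ} (h : q + 1 < ℓ - 1) :
    (OVGraph k n d ℓ a).Adj (hpath i ⟨q, by omega⟩) (hpath i ⟨q + 1, h⟩) := by
  simp [OVGraph]

theorem adj_dim_dpath_zero (t : Fin d) (h : 0 < ℓ - 1) :
    (OVGraph k n d ℓ a).Adj (dim t) (dpath t ⟨0, h⟩) := by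
  simp [OVGraph]

theorem adj_dpath_succ (t : Fin d) {q : ℕ} (h : q + 1 < ℓ - 1) :
    (OVGraph k n d ℓ a).Adj (dpath t ⟨q, by omega⟩) (dpath t ⟨q + 1, h⟩) := by
  simp [OVGraph]

theorem exists_walk_hub_hpath (i : Fin k) (q : ℕ) (hq : q < ℓ - 1) :
    ∃ w : (OVGraph k n d ℓ a).Walk (hub i) (hpath i ⟨q, hq⟩), w.length = q + 1 := by
  induction q with
  | zero => exact ⟨.cons (adj_hub_hpath_zero a i hq) .nil, rfl⟩
  | succ q ih =>
    obtain ⟨w, hw⟩ := ih (by omega)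
    exact ⟨w.concat (adj_hpath_succ a i hq), by simp [hw]⟩

theorem exists_walk_dim_dpath (t : Fin d) (q : ℕ) (hq : q < ℓ - 1) :
    ∃ w : (OVGraph k n d ℓ a).Walk (dim t) (dpath t ⟨q, hq⟩), w.length = q + 1 := by
  induction q with
  | zero => exact ⟨.cons (adj_dim_dpath_zero a t hq) .nil, rfl⟩
  | succ q ih =>
    obtain ⟨w, hw⟩ := ih (by omega)
    exact ⟨w.concat (adj_dpath_succ a t hq), by simp [hw]⟩

/-- Lower bounds for the distances to `v_i = hpath i (ℓ - 2)` and to `w_t = dpath t (ℓ - 2)`. -/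
def hubPotential (i : Fin k) : OVVert k n d ℓ → ℕ
  | vec i' _ => if i' = i then ℓ else ℓ + 2
  | hub i' => if i' = i then ℓ - 1 else ℓ + 3
  | hpath i' q => if i' = i then ℓ - 2 - q else ℓ + 4 + q
  | dim _ => ℓ + 1
  | dpath _ q => ℓ + 2 + q

def dimPotential (t : Fin d) : OVVert k n d ℓ → ℕ
  | vec i j => if a i j t = false then ℓ else ℓ + 2
  | hub _ => ℓ + 1
  | hpath _ q => ℓ + 2 + q
  | dim t' => if t' = t then ℓ - 1 else ℓ + 1
  | dpath t' q => if t' = t then ℓ - 2 - q else ℓ + 2 + q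

variable {a}

theorem hubPotential_le_of_adj (hℓ : 2 ≤ ℓ) (i : Fin k) {x y : OVVert k n d ℓ}
    (h : (OVGraph k n d ℓ a).Adj x y) : hubPotential i x ≤ hubPotential i y + 1 := by
  refine le_add_one_of_fromRel_adj (fun x y hr => ?_) h
  rcases x with ⟨i', j'⟩ | i' | ⟨i', ⟨p, hp⟩⟩ | t' | ⟨t', ⟨p, hp⟩⟩ <;>
    rcases y with ⟨i'', j''⟩ | i'' | ⟨i'', ⟨q, hq⟩⟩ | t'' | ⟨t'', ⟨q, hq⟩⟩ <;>
    simp only at hr <;> simp only [hubPotential] <;> grind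

theorem dimPotential_le_of_adj (hℓ : 2 ≤ ℓ) (t : Fin d) {x y : OVVert k n d ℓ}
    (h : (OVGraph k n d ℓ a).Adj x y) : dimPotential a t x ≤ dimPotential a t y + 1 := by
  refine le_add_one_of_fromRel_adj (fun x y hr => ?_) h
  rcases x with ⟨i', j'⟩ | i' | ⟨i', ⟨p, hp⟩⟩ | t' | ⟨t', ⟨p, hp⟩⟩ <;>
    rcases y with ⟨i'', j''⟩ | i'' | ⟨i'', ⟨q, hq⟩⟩ | t'' | ⟨t'', ⟨q, hq⟩⟩ <;>
    simp only at hr <;> simp only [dimPotential] <;> grind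

theorem isOnBranch_of_walk_length_le (hℓ : 2 ≤ ℓ) {i : Fin k} {s : OVVert k n d ℓ}
    (w : (OVGraph k n d ℓ a).Walk s (hpath i ⟨ℓ - 2, by omega⟩)) (hw : w.length ≤ ℓ) :
    s.IsOnBranch i := by
  have hpot := w.le_add_length_of_adj_le fun _ _ => hubPotential_le_of_adj hℓ i
  simp only [hubPotential, if_true, Nat.sub_self] at hpot
  cases s <;> simp only [IsOnBranch] at hpot ⊢ <;> grind

theorem exists_vec_of_walk_length_le (hℓ : 2 ≤ ℓ) {i : Fin k} {t : Fin d} {s : OVVert k n d ℓ}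
    (hs : s.IsOnBranch i) (w : (OVGraph k n d ℓ a).Walk s (dpath t ⟨ℓ - 2, by omega⟩))
    (hw : w.length ≤ ℓ) : ∃ j, s = vec i j ∧ a i j t = false := by
  have hpot := w.le_add_length_of_adj_le fun _ _ => dimPotential_le_of_adj hℓ t
  simp only [dimPotential, if_true, Nat.sub_self] at hpot
  cases s <;> simp only [IsOnBranch] at hpot hs <;> grind

theorem exists_cover_of_dominating (hℓ : 2 ≤ ℓ) (hn : 1 ≤ n) {S : Finset (OVVert k n d ℓ)}
    (hS : S.card = k)
    (hdom : ∀ v, ∃ s ∈ S, ∃ w : (OVGraph k n d ℓ a).Walk s v, w.length ≤ ℓ) :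
    ∃ f : Fin k → Fin n, ∀ t, ∃ i, a i (f i) t = false := by
  have hbranch (i : Fin k) : ∃ s ∈ S, s.IsOnBranch i :=
    have ⟨s, hs, w, hw⟩ := hdom (hpath i ⟨ℓ - 2, by omega⟩)
    ⟨s, hs, isOnBranch_of_walk_length_le hℓ w hw⟩
  choose g hgS hg using hbranch
  have hg_inj : Function.Injective g := fun i i' h => (hg i).unique (h ▸ hg i')
  have hg_surj : Set.SurjOn g Set.univ S := by
    simpa using Finset.surjOn_of_injOn_of_card_le g (s := .univ) (fun i _ => hgS i)
      hg_inj.injOn (by rw [hS, Finset.card_fin])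
  refine ⟨fun i => (g i).vecIndex ⟨0, hn⟩, fun t => ?_⟩
  obtain ⟨s, hs, w, hw⟩ := hdom (dpath t ⟨ℓ - 2, by omega⟩)
  obtain ⟨i, -, rfl⟩ := hg_surj hs
  obtain ⟨j, hj, hjt⟩ := exists_vec_of_walk_length_le hℓ (hg i) w hw
  exact ⟨i, by simpa only [hj, vecIndex] using hjt⟩

theorem exists_walk_length_le_of_cover (hℓ : 2 ≤ ℓ) {f : Fin k → Fin n}
    (hf : ∀ t, ∃ i, a i (f i) t = false) (v : OVVert k n d ℓ) :
    ∃ i, ∃ w : (OVGraph k n d ℓ a).Walk (vec i (f i)) v, w.length ≤ ℓ := by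
  rcases v with ⟨i, j⟩ | i | ⟨i, q, hq⟩ | t | ⟨t, q, hq⟩
  · exact ⟨i, .cons (adj_vec_hub a i (f i)) (.cons (adj_vec_hub a i j).symm .nil),
      by simp; omega⟩
  · exact ⟨i, .cons (adj_vec_hub a i (f i)) .nil, by simp; omega⟩
  · obtain ⟨w, hw⟩ := exists_walk_hub_hpath a i q hq
    exact ⟨i, .cons (adj_vec_hub a i (f i)) w, by simp [hw]; omega⟩
  · obtain ⟨i, hi⟩ := hf t
    exact ⟨i, .cons (adj_vec_dim a hi) .nil, by simp; omega⟩
  · obtain ⟨i, hi⟩ := hf t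
    obtain ⟨w, hw⟩ := exists_walk_dim_dpath a t q hq
    exact ⟨i, .cons (adj_vec_dim a hi) w, by simp [hw]; omega⟩

end OVGraph

theorem stmt8_general (k n d ℓ : ℕ) (hℓ : 2 ≤ ℓ) (hn : 1 ≤ n)
    (a : Fin k → Fin n → Fin d → Bool) :
    (∃ S : Finset (OVVert k n d ℓ), S.card = k ∧
        ∀ v : OVVert k n d ℓ, ∃ s ∈ S, ∃ w : (OVGraph k n d ℓ a).Walk s v, w.length ≤ ℓ) ↔
      (∃ f : Fin k → Fin n, ∀ t : Fin d, ∃ i : Fin k, a i (f i) t = false) := by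
  constructor
  · rintro ⟨S, hS, hdom⟩
    exact OVGraph.exists_cover_of_dominating hℓ hn hS hdom
  · rintro ⟨f, hf⟩
    let chosen : Fin k ↪ OVVert k n d ℓ :=
      ⟨fun i => .vec i (f i), fun i i' h => (OVVert.vec.inj h).1⟩
    refine ⟨Finset.univ.map chosen, by rw [Finset.card_map, Finset.card_fin], fun v => ?_⟩
    obtain ⟨i, w, hw⟩ := OVGraph.exists_walk_length_le_of_cover hℓ hf v
    exact ⟨chosen i, Finset.mem_map_of_mem _ (Finset.mem_univ i), w, hw⟩

/-- The reduction graph has a `k`-dominating set at distance `ℓ` iff there are vectors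
`a₁ ∈ A₁, …, a_k ∈ A_k` such that in every coordinate at least one of them is `0`. -/
theorem stmt8 (k n d ℓ : ℕ) (hk : 1 ≤ k) (hℓ : 2 ≤ ℓ) (hd : 1 ≤ d) (hn : 1 ≤ n)
    (a : Fin k → Fin n → Fin d → Bool) :
    (∃ S : Finset (OVVert k n d ℓ), S.card = k ∧
        ∀ v : OVVert k n d ℓ, ∃ s ∈ S, ∃ w : (OVGraph k n d ℓ a).Walk s v, w.length ≤ ℓ) ↔
      (∃ f : Fin k → Fin n, ∀ t : Fin d, ∃ i : Fin k, a i (f i) t = false) :=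
  stmt8_general k n d ℓ hℓ hn a
end

section
/- Let k ≥ 3 and d ≥ 1 be integers and let A₁, …, A_k be finite sets of binary vectors of dimension d with |A_i| ≥ 2 for each i. Construct the finite simple graph G as follows: for each i ∈ [k] and each vector in A_i there is a vertex a^i_j; for each i there is a hub vertex A_i adjacent to all vertices a^i_j of its own layer; every vertex a^k_j of the k-th layer is adjacent to every vertex a^s_t with s ∈ [k−1]; for each t ∈ [d] there is a vertex D_t adjacent to a^i_j if and only if the vector a^i_j has t-th coordinate equal to 0; there are no other edges. Then G has a dominating set of cardinality k if and only if there exist vectors a₁ ∈ A₁, …, a_k ∈ A_k such that for every coordinate t ∈ [d] at least one of a₁[t], …, a_k[t] equals 0. -/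
def DomVert (k d : ℕ) (A : Fin k → Finset (Fin d → Bool)) : Type :=
  (Σ i : Fin k, {v // v ∈ A i}) ⊕ Fin k ⊕ Fin d

def DomGraph (k d : ℕ) (A : Fin k → Finset (Fin d → Bool)) :
    SimpleGraph (DomVert k d A) :=
  SimpleGraph.fromRel (fun x y =>
    match x, y with
    | Sum.inl ⟨i, _⟩, Sum.inr (Sum.inl i') => i = i'
    | Sum.inl ⟨_, v⟩, Sum.inr (Sum.inr t) => v.val t = false
    | Sum.inl ⟨i, _⟩, Sum.inl ⟨i', _⟩ => i.val = k - 1 ∧ i'.val < k - 1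
    | _, _ => False)

/-- For `k ≥ 3`, the reduction graph has a dominating set of cardinality `k` iff there are
vectors `a₁ ∈ A₁, …, a_k ∈ A_k` such that in every coordinate at least one of them is `0`. -/
theorem stmt9 (k d : ℕ) (hk : 3 ≤ k) (hd : 1 ≤ d) (A : Fin k → Finset (Fin d → Bool))
    (hA : ∀ i, 2 ≤ (A i).card) :
    (∃ S : Finset (DomVert k d A), S.card = k ∧
        ∀ v : DomVert k d A, ∃ s ∈ S, v = s ∨ (DomGraph k d A).Adj s v) ↔
      (∃ f : Fin k → (Fin d → Bool), (∀ i, f i ∈ A i) ∧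
        ∀ t : Fin d, ∃ i : Fin k, f i t = false) := by
  classical
  have hAne : ∀ i, (A i).Nonempty :=
    fun i => Finset.card_pos.mp (lt_of_lt_of_le two_pos (hA i))
  constructor
  · rintro ⟨S, hScard, hdom⟩
    -- every hub must be dominated, so S contains one element per block
    have key : ∀ i : Fin k, ∃ s, s ∈ S ∧
        (s = Sum.inr (Sum.inl i) ∨ ∃ v : {v // v ∈ A i}, s = Sum.inl ⟨i, v⟩) := by
      intro i
      obtain ⟨s, hsS, hcase⟩ := hdom (Sum.inr (Sum.inl i))
      refine ⟨s, hsS, ?_⟩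
      rcases hcase with h | h
      · exact Or.inl h.symm
      · rcases s with ⟨i', v⟩ | i' | t <;>
          simp [DomGraph, SimpleGraph.fromRel] at h
        subst h
        exact Or.inr ⟨v, rfl⟩
    choose g hgS hg using key
    have ginj : Function.Injective g := by
      intro i j hij
      rcases hg i with hi | ⟨v, hi⟩ <;> rcases hg j with hj | ⟨w, hj⟩ <;>
        rw [hi, hj] at hij
      · exact Sum.inl.inj (Sum.inr.inj hij)
      · exact (Sum.inr_ne_inl hij).elim
      · exact (Sum.inl_ne_inr hij).elim
      · exact congrArg Sigma.fst (Sum.inl.inj hij)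
    have hSim : Finset.image g Finset.univ = S := by
      apply Finset.eq_of_subset_of_card_le
      · intro s hs
        obtain ⟨i, _, rfl⟩ := Finset.mem_image.mp hs
        exact hgS i
      · rw [hScard, Finset.card_image_of_injective _ ginj, Finset.card_univ,
          Fintype.card_fin]
    set f : Fin k → (Fin d → Bool) := fun i =>
      if h : ∃ v : {v // v ∈ A i}, g i = Sum.inl ⟨i, v⟩ then h.choose.val
      else (hAne i).choose with hf
    have hfmem : ∀ i, f i ∈ A i := by
      intro i
      rw [hf]
      dsimp only
      split
      · next h => exact h.choose.property
      · next h => exact (hAne i).choose_spec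
    refine ⟨f, hfmem, ?_⟩
    intro t
    obtain ⟨s, hsS, hcase⟩ := hdom (Sum.inr (Sum.inr t))
    rw [← hSim] at hsS
    obtain ⟨i, -, rfl⟩ := Finset.mem_image.mp hsS
    rcases hg i with hi | ⟨v, hi⟩
    · exfalso
      rw [hi] at hcase
      rcases hcase with h | h
      · exact Sum.inl_ne_inr (Sum.inr.inj h).symm
      · simp [DomGraph, SimpleGraph.fromRel] at h
    · rw [hi] at hcase
      rcases hcase with h | h
      · exact absurd h.symm (by exact fun hc => Sum.inl_ne_inr hc)
      · simp [DomGraph, SimpleGraph.fromRel] at h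
        refine ⟨i, ?_⟩
        have hex : ∃ w : {w // w ∈ A i}, g i = Sum.inl ⟨i, w⟩ := ⟨v, hi⟩
        have hval : f i = hex.choose.val := by rw [hf]; exact dif_pos hex
        have h3 : (Sum.inl ⟨i, v⟩ : DomVert k d A) = Sum.inl ⟨i, hex.choose⟩ :=
          hi.symm.trans hex.choose_spec
        have h5 : v = hex.choose := by
          have h4 := Sum.inl.inj h3
          simpa using h4
        rw [hval, ← h5]
        exact h
  · rintro ⟨f, hfmem, hcov⟩
    set e : Fin k → DomVert k d A := fun i => Sum.inl ⟨i, ⟨f i, hfmem i⟩⟩ with he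
    have einj : Function.Injective e := by
      intro i j hij
      exact congrArg Sigma.fst (Sum.inl.inj hij)
    refine ⟨Finset.image e Finset.univ, ?_, ?_⟩
    · rw [Finset.card_image_of_injective _ einj, Finset.card_univ, Fintype.card_fin]
    · intro v
      rcases v with ⟨i, w⟩ | i | t
      · by_cases hik : i.val < k - 1
        · refine ⟨e ⟨k - 1, by omega⟩, Finset.mem_image_of_mem _ (Finset.mem_univ _),
            Or.inr ?_⟩
          exact ⟨fun hc => by
              have h0 : k - 1 = i.val := congrArg Fin.val (congrArg Sigma.fst (Sum.inl.inj hc))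
              omega,
            Or.inl ⟨rfl, hik⟩⟩
        · have hik' : i.val = k - 1 := by
            have := i.isLt; omega
          refine ⟨e ⟨0, by omega⟩, Finset.mem_image_of_mem _ (Finset.mem_univ _),
            Or.inr ?_⟩
          exact ⟨fun hc => by
              have h0 : (0 : ℕ) = i.val := congrArg Fin.val (congrArg Sigma.fst (Sum.inl.inj hc))
              omega,
            Or.inr ⟨hik', (by omega : (0 : ℕ) < k - 1)⟩⟩
      · exact ⟨e i, Finset.mem_image_of_mem _ (Finset.mem_univ _),
          Or.inr ⟨fun hc => Sum.inl_ne_inr hc, Or.inl rfl⟩⟩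
      · obtain ⟨i, hi⟩ := hcov t
        exact ⟨e i, Finset.mem_image_of_mem _ (Finset.mem_univ _),
          Or.inr ⟨fun hc => Sum.inl_ne_inr hc, Or.inl hi⟩⟩
end

section
/- Let k ≥ 3 and d > k be integers and let x₁, …, x_k : [d] → {0,1} be pairwise distinct binary vectors of dimension d. Then there exist pairwise distinct indices i₁, …, i_{k−1} ∈ [d] such that for every j ∈ {2, …, k} the tuple (x₁[i₁], …, x₁[i_{k−1}]) is different from the tuple (x_j[i₁], …, x_j[i_{k−1}]). -/
open Finset Function

/-! For each `j ≠ z` pick one coordinate where `x j` differs from `x z`; these at most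
`|ι| - 1` coordinates, padded with arbitrary further ones, are the required indices. -/

section Separating

variable {ι α β : Type*} [Fintype ι] [DecidableEq ι] [DecidableEq α] {x : ι → α → β}

theorem exists_finset_separating (hx : Injective x) (z : ι) :
    ∃ S : Finset α, #S ≤ Fintype.card ι - 1 ∧ ∀ j ≠ z, ∃ i ∈ S, x z i ≠ x j i := by
  have hdiff (j : {j // j ≠ z}) : ∃ i, x z i ≠ x j i :=
    ne_iff.mp fun h => j.2 (hx h).symm
  choose f hf using hdiff
  refine ⟨univ.image f, ?_, fun j hj => ⟨f ⟨j, hj⟩, mem_image_of_mem f (mem_univ _), hf _⟩⟩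
  calc #(univ.image f) ≤ #(univ : Finset {j // j ≠ z}) := card_image_le
    _ = Fintype.card ι - 1 := by rw [card_univ, Fintype.card_subtype_compl, Fintype.card_subtype_eq]

theorem exists_injective_separating [Fintype α] (hx : Injective x) (z : ι) {m : ℕ}
    (hιm : Fintype.card ι - 1 ≤ m) (hmα : m ≤ Fintype.card α) :
    ∃ idx : Fin m → α, Injective idx ∧ ∀ j ≠ z, ∃ t, x z (idx t) ≠ x j (idx t) := by
  obtain ⟨S, hS, hsep⟩ := exists_finset_separating hx z
  obtain ⟨T, hST, hT⟩ := exists_superset_card_eq (hS.trans hιm) (by simpa using hmα)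
  let e := T.equivFinOfCardEq hT
  refine ⟨fun t => e.symm t, Subtype.val_injective.comp e.symm.injective, fun j hj => ?_⟩
  obtain ⟨i, hiS, hi⟩ := hsep j hj
  exact ⟨e ⟨i, hST hiS⟩, by simpa using hi⟩

end Separating

/-- For pairwise distinct binary vectors `x₁, …, x_k` of dimension `d > k` (with `k ≥ 3`),
there exist pairwise distinct indices `i₁, …, i_{k−1}` such that for every `j ∈ {2, …, k}`
the tuple `(x₁[i₁], …, x₁[i_{k−1}])` differs from `(x_j[i₁], …, x_j[i_{k−1}])`. -/
theorem stmt11 (k d : ℕ) (hk : 3 ≤ k) (hd : k < d) (x : Fin k → Fin d → Bool)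
    (hx : Function.Injective x) :
    ∃ idx : Fin (k - 1) → Fin d, Function.Injective idx ∧
      ∀ j : Fin k, j ≠ ⟨0, by omega⟩ →
        ∃ t : Fin (k - 1), x ⟨0, by omega⟩ (idx t) ≠ x j (idx t) :=
  exists_injective_separating hx _ (by simp) (by simp; omega)
end

section
/- Let S be a finite set, r ≥ 2, and let φ : S → {0,1}^r be an injective function. Define T = {(x, i, j, b₁, b₂) : x ∈ S, i, j ∈ [r], i ≠ j, b₁, b₂ ∈ {0,1}, (b₁, b₂) ≠ (1 − φ(x)[i], 1 − φ(x)[j])}. Then for every triple of pairwise distinct elements x₁, x₂, x₃ ∈ S there exist i ≠ j in [r] and bits b₁, b₂ ∈ {0,1} such that (x₁, i, j, b₁, b₂) ∈ T, (x₂, i, j, b₁, b₂) ∈ T, and (x₃, i, j, b₁, b₂) ∉ T. -/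
/-- The set `T = {(x, i, j, b₁, b₂) : i ≠ j, (b₁, b₂) ≠ (1 − φ(x)[i], 1 − φ(x)[j])}`
(bits modelled by `Bool`, complement by `!`). -/
def TSet {S : Type*} (r : ℕ) (φ : S → Fin r → Bool) :
    Set (S × Fin r × Fin r × Bool × Bool) :=
  {q | match q with
    | (x, i, j, b₁, b₂) => i ≠ j ∧ (b₁, b₂) ≠ (!(φ x i), !(φ x j))}

/-! The witness is `(i, j, 1 - φ(x₃)[i], 1 - φ(x₃)[j])`, which lies outside `T` at `x₃` by
construction. It lies in `T` at `x` as soon as `φ(x)` differs from `φ(x₃)` at `i` or at `j`, so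
it suffices to find two distinct coordinates hitting both a disagreement of `φ(x₁)` with `φ(x₃)`
and one of `φ(x₂)` with `φ(x₃)`; injectivity provides such disagreements. -/

theorem Function.exists_ne_pair_of_ne_of_ne {ι α : Type*} [Nontrivial ι] {f g h : ι → α}
    (hf : f ≠ h) (hg : g ≠ h) :
    ∃ i j, i ≠ j ∧ (f i ≠ h i ∨ f j ≠ h j) ∧ (g i ≠ h i ∨ g j ≠ h j) := by
  obtain ⟨i, hi⟩ := Function.ne_iff.1 hf
  obtain ⟨j, hj⟩ := Function.ne_iff.1 hg
  by_cases hij : i = j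
  · subst hij
    obtain ⟨k, hki⟩ := exists_ne i
    exact ⟨i, k, hki.symm, .inl hi, .inl hj⟩
  · exact ⟨i, j, hij, .inl hi, .inr hj⟩

section TSet

variable {S : Type*} {r : ℕ} (φ : S → Fin r → Bool)

theorem complement_notMem_TSet (x : S) (i j : Fin r) :
    (x, i, j, !φ x i, !φ x j) ∉ TSet r φ :=
  fun h => h.2 rfl

theorem complement_mem_TSet_iff (x y : S) (i j : Fin r) :
    (y, i, j, !φ x i, !φ x j) ∈ TSet r φ ↔ i ≠ j ∧ (φ y i ≠ φ x i ∨ φ y j ≠ φ x j) := by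
  simp only [TSet, Set.mem_ofPred_eq, ne_eq, Prod.mk.injEq, not_and_or]
  grind

end TSet

theorem stmt15_general {S : Type*} (r : ℕ) (hr : 2 ≤ r) (φ : S → Fin r → Bool)
    (hφ : Function.Injective φ) (x₁ x₂ x₃ : S)
    (h13 : x₁ ≠ x₃) (h23 : x₂ ≠ x₃) :
    ∃ i j : Fin r, i ≠ j ∧ ∃ b₁ b₂ : Bool,
      (x₁, i, j, b₁, b₂) ∈ TSet r φ ∧ (x₂, i, j, b₁, b₂) ∈ TSet r φ ∧
      (x₃, i, j, b₁, b₂) ∉ TSet r φ := by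
  have : Nontrivial (Fin r) := Fin.nontrivial_iff_two_le.2 hr
  obtain ⟨i, j, hij, h₁, h₂⟩ :=
    Function.exists_ne_pair_of_ne_of_ne (hφ.ne h13) (hφ.ne h23)
  exact ⟨i, j, hij, !φ x₃ i, !φ x₃ j, (complement_mem_TSet_iff φ x₃ x₁ i j).2 ⟨hij, h₁⟩,
    (complement_mem_TSet_iff φ x₃ x₂ i j).2 ⟨hij, h₂⟩, complement_notMem_TSet φ x₃ i j⟩

/-- For an injective `φ : S → {0,1}^r` and pairwise distinct `x₁, x₂, x₃ ∈ S`, there are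
`i ≠ j` and bits `b₁, b₂` with `(x₁,i,j,b₁,b₂) ∈ T`, `(x₂,i,j,b₁,b₂) ∈ T`, and
`(x₃,i,j,b₁,b₂) ∉ T`. -/
theorem stmt15 {S : Type*} [Fintype S] (r : ℕ) (hr : 2 ≤ r) (φ : S → Fin r → Bool)
    (hφ : Function.Injective φ) (x₁ x₂ x₃ : S)
    (h12 : x₁ ≠ x₂) (h13 : x₁ ≠ x₃) (h23 : x₂ ≠ x₃) :
    ∃ i j : Fin r, i ≠ j ∧ ∃ b₁ b₂ : Bool,
      (x₁, i, j, b₁, b₂) ∈ TSet r φ ∧ (x₂, i, j, b₁, b₂) ∈ TSet r φ ∧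
      (x₃, i, j, b₁, b₂) ∉ TSet r φ :=
  stmt15_general r hr φ hφ x₁ x₂ x₃ h13 h23
end

section
/- Let p be a prime and L ≥ 1, k ≥ 1 integers; set d = L + k and R = L + d·k + k + 1, and assume p > R and p > d·k² + 2k. Let V be the set of polynomials over the field 𝔽_p of degree at most d, and for f, g ∈ V declare f adjacent to g if and only if f ≠ g and there exists an integer x with L < x ≤ R such that f and g take the same value at the image of x in 𝔽_p. Then for all a₁, …, a_k, b₁, …, b_k ∈ V with a_i ≠ b_j for all i, j ∈ [k], and for every tuple (ℓ₁, …, ℓ_L) ∈ 𝔽_p^L, there exists f ∈ V with f ∉ {a₁, …, a_k, b₁, …, b_k}, f(ī) = ℓ_i for every integer 1 ≤ i ≤ L (ī the image of i in 𝔽_p), f adjacent to a_j for every j ∈ [k], and f not adjacent to b_j for every j ∈ [k]. -/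
open Polynomial Finset

/-- Casting is injective on naturals below `p`. -/
lemma auxCastInj {p : ℕ} {x y : ℕ} (hx : x < p) (hy : y < p)
    (h : (x : ZMod p) = (y : ZMod p)) : x = y := by
  have := congrArg ZMod.val h
  rwa [ZMod.val_cast_of_lt hx, ZMod.val_cast_of_lt hy] at this

/-- A nonzero polynomial over `𝔽_p` has at most `natDegree` roots among a set of
naturals below `p`. -/
lemma auxRootsCard {p : ℕ} [Fact p.Prime] (q : Polynomial (ZMod p)) (hq : q ≠ 0)
    (I : Finset ℕ) (hI : ∀ x ∈ I, x < p) :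
    (I.filter fun x : ℕ => q.eval (x : ZMod p) = 0).card ≤ q.natDegree := by
  classical
  have h1 : (I.filter fun x : ℕ => q.eval (x : ZMod p) = 0).card ≤ q.roots.toFinset.card := by
    refine Finset.card_le_card_of_injOn (fun x : ℕ => (x : ZMod p)) ?_ ?_
    · intro x hx
      simp only [Finset.mem_coe, Finset.mem_filter] at hx ⊢
      rw [Multiset.mem_toFinset, Polynomial.mem_roots hq]
      exact hx.2
    · intro x hx y hy hxy
      simp only [Finset.coe_filter, Set.mem_setOf_eq] at hx hy
      exact auxCastInj (hI x hx.1) (hI y hy.1) hxy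
  exact h1.trans ((Multiset.toFinset_card_le _).trans (Polynomial.card_roots' q))

/-- Greedy choice of a system of distinct representatives. -/
lemma auxGreedy : ∀ (n : ℕ) (G : Fin n → Finset ℕ), (∀ i, n ≤ (G i).card) →
    ∃ g : Fin n → ℕ, Function.Injective g ∧ ∀ i, g i ∈ G i := by
  intro n
  induction n with
  | zero => exact fun G _ => ⟨Fin.elim0, fun i => i.elim0, fun i => i.elim0⟩
  | succ n ih =>
    intro G hG
    obtain ⟨y, hy⟩ := Finset.card_pos.mp (lt_of_lt_of_le (Nat.succ_pos n) (hG (Fin.last n)))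
    obtain ⟨g, hginj, hgmem⟩ := ih (fun i => (G i.castSucc).erase y) (fun i => by
      have h1 := hG i.castSucc
      have h2 := Finset.pred_card_le_card_erase (s := G i.castSucc) (a := y)
      omega)
    refine ⟨Fin.snoc g y, ?_, ?_⟩
    · intro i j hij
      induction i using Fin.lastCases with
      | last =>
        induction j using Fin.lastCases with
        | last => rfl
        | cast j =>
          simp only [Fin.snoc_last, Fin.snoc_castSucc] at hij
          exact absurd hij.symm (Finset.ne_of_mem_erase (hgmem j))
      | cast i =>
        induction j using Fin.lastCases with
        | last =>
          simp only [Fin.snoc_last, Fin.snoc_castSucc] at hij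
          exact absurd hij (Finset.ne_of_mem_erase (hgmem i))
        | cast j =>
          simp only [Fin.snoc_castSucc] at hij
          exact congrArg Fin.castSucc (hginj hij)
    · intro i
      induction i using Fin.lastCases with
      | last => simpa using hy
      | cast i =>
        simpa using Finset.mem_of_mem_erase (hgmem i)

/-- Adjacency of the polynomial gadget graph: `f` and `g` are adjacent iff `f ≠ g` and
there is an integer `x` with `L < x ≤ R` at whose image in `𝔽_p` the polynomials `f` and
`g` take the same value. -/
def polyAdj (p L R : ℕ) (f g : Polynomial (ZMod p)) : Prop :=
  f ≠ g ∧ ∃ x : ℕ, L < x ∧ x ≤ R ∧ f.eval (x : ZMod p) = g.eval (x : ZMod p)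

/-- With `d = L + k` and `R = L + dk + k + 1`, `p` prime, `p > R` and `p > dk² + 2k`:
for all polynomials `a₁, …, a_k, b₁, …, b_k` over `𝔽_p` of degree at most `d` with
`aᵢ ≠ bⱼ` for all `i, j`, and every tuple `(ℓ₁, …, ℓ_L)`, there is a polynomial `f` of
degree at most `d`, distinct from all `aᵢ` and `bⱼ`, with `f(ī) = ℓᵢ` for `1 ≤ i ≤ L`,
adjacent to every `aⱼ` and adjacent to no `bⱼ`. -/
theorem stmt18 (p L k : ℕ) (hp : p.Prime) (hL : 1 ≤ L) (hk : 1 ≤ k)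
    (hpR : L + (L + k) * k + k + 1 < p) (hp2 : (L + k) * k ^ 2 + 2 * k < p)
    (a b : Fin k → Polynomial (ZMod p))
    (hadeg : ∀ i, (a i).natDegree ≤ L + k) (hbdeg : ∀ i, (b i).natDegree ≤ L + k)
    (hab : ∀ i j : Fin k, a i ≠ b j) (ℓv : Fin L → ZMod p) :
    ∃ f : Polynomial (ZMod p), f.natDegree ≤ L + k ∧
      (∀ i : Fin k, f ≠ a i) ∧ (∀ j : Fin k, f ≠ b j) ∧
      (∀ i : Fin L, f.eval ((i.val + 1 : ℕ) : ZMod p) = ℓv i) ∧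
      (∀ j : Fin k, polyAdj p L (L + (L + k) * k + k + 1) f (a j)) ∧
      (∀ j : Fin k, ¬ polyAdj p L (L + (L + k) * k + k + 1) f (b j)) := by
  classical
  haveI : Fact p.Prime := ⟨hp⟩
  set R : ℕ := L + (L + k) * k + k + 1 with hRdef
  set I : Finset ℕ := Finset.Ioc L R with hIdef
  have hIcard : I.card = (L + k) * k + k + 1 := by
    rw [hIdef, Nat.card_Ioc]; omega
  have hIlt : ∀ x ∈ I, x < p := by
    intro x hx
    rw [hIdef, Finset.mem_Ioc] at hx
    omega
  -- the bad points for each a i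
  set Bad : Fin k → Finset ℕ :=
    fun i => I.filter (fun x : ℕ => ∃ j : Fin k, (a i - b j).eval (x : ZMod p) = 0) with hBaddef
  have hBadsub : ∀ i, Bad i ⊆ Finset.univ.biUnion
      (fun j : Fin k => I.filter fun x : ℕ => (a i - b j).eval (x : ZMod p) = 0) := by
    intro i x hx
    rw [hBaddef, Finset.mem_filter] at hx
    obtain ⟨hxI, j, hj⟩ := hx
    exact Finset.mem_biUnion.mpr ⟨j, Finset.mem_univ j, Finset.mem_filter.mpr ⟨hxI, hj⟩⟩
  have hBadcard : ∀ i, (Bad i).card ≤ (L + k) * k := by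
    intro i
    refine (Finset.card_le_card (hBadsub i)).trans ?_
    refine (Finset.card_biUnion_le).trans ?_
    have h1 : ∀ j : Fin k,
        (I.filter fun x : ℕ => (a i - b j).eval (x : ZMod p) = 0).card ≤ L + k := by
      intro j
      refine (auxRootsCard _ (sub_ne_zero_of_ne (hab i j)) I hIlt).trans ?_
      exact (Polynomial.natDegree_sub_le _ _).trans (by
        simp [max_le_iff, hadeg i, hbdeg j])
    calc ∑ j : Fin k, (I.filter fun x : ℕ => (a i - b j).eval (x : ZMod p) = 0).card
        ≤ ∑ _j : Fin k, (L + k) := Finset.sum_le_sum (fun j _ => h1 j)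
      _ = (L + k) * k := by simp [mul_comm]
  set x0 : ℕ := L + 1 with hx0def
  have hx0I : x0 ∈ I := by rw [hIdef, Finset.mem_Ioc]; omega
  -- choose the points x_i
  have hGoodcard : ∀ i : Fin k, k ≤ ((I \ Bad i).erase x0).card := by
    intro i
    have h1 : Bad i ⊆ I := by rw [hBaddef]; exact Finset.filter_subset _ _
    have h2 : (I \ Bad i).card = I.card - (Bad i).card := Finset.card_sdiff_of_subset h1
    have h3 := Finset.pred_card_le_card_erase (s := I \ Bad i) (a := x0)
    have h4 := hBadcard i
    omega
  obtain ⟨xf, hxfinj, hxfmem⟩ := auxGreedy k (fun i => (I \ Bad i).erase x0) hGoodcard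
  have hxfI : ∀ i, xf i ∈ I := fun i =>
    (Finset.mem_sdiff.mp (Finset.mem_of_mem_erase (hxfmem i))).1
  have hxfx0 : ∀ i, xf i ≠ x0 := fun i => Finset.ne_of_mem_erase (hxfmem i)
  have hxfgood : ∀ i j : Fin k,
      (a i).eval ((xf i : ℕ) : ZMod p) ≠ (b j).eval ((xf i : ℕ) : ZMod p) := by
    intro i j h
    have h1 := (Finset.mem_sdiff.mp (Finset.mem_of_mem_erase (hxfmem i))).2
    rw [hBaddef, Finset.mem_filter] at h1
    push_neg at h1
    exact (sub_ne_zero_of_ne (h1 (hxfI i) j)) (by simp [Polynomial.eval_sub, h])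
  have hxfgtL : ∀ i, L < xf i := by
    intro i
    have := hxfI i
    rw [hIdef, Finset.mem_Ioc] at this
    exact this.1
  have hxfleR : ∀ i, xf i ≤ R := by
    intro i
    have := hxfI i
    rw [hIdef, Finset.mem_Ioc] at this
    exact this.2
  -- the node set
  set S : Finset ℕ := (Finset.Icc 1 L ∪ Finset.image xf Finset.univ) ∪ {x0} with hSdef
  have hmemS : ∀ n ∈ S, n ≤ R := by
    intro n hn
    rw [hSdef, Finset.mem_union, Finset.mem_union] at hn
    rcases hn with (h | h) | h
    · rw [Finset.mem_Icc] at h; omega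
    · obtain ⟨i, _, rfl⟩ := Finset.mem_image.mp h; exact hxfleR i
    · rw [Finset.mem_singleton] at h; omega
  have vInj : Set.InjOn (Nat.cast : ℕ → ZMod p) ↑S := by
    intro x hx y hy h
    exact auxCastInj (lt_of_le_of_lt (hmemS x hx) hpR) (lt_of_le_of_lt (hmemS y hy) hpR) h
  have hdisj1 : Disjoint (Finset.Icc 1 L) (Finset.image xf Finset.univ) := by
    rw [Finset.disjoint_left]
    intro n hn hn2
    obtain ⟨i, _, rfl⟩ := Finset.mem_image.mp hn2
    rw [Finset.mem_Icc] at hn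
    exact absurd (hxfgtL i) (by omega)
  have hx0notimg : x0 ∉ Finset.image xf Finset.univ := by
    intro h
    obtain ⟨i, _, hi⟩ := Finset.mem_image.mp h
    exact hxfx0 i hi
  have hdisj2 : Disjoint (Finset.Icc 1 L ∪ Finset.image xf Finset.univ) ({x0} : Finset ℕ) := by
    rw [Finset.disjoint_right]
    intro n hn hn2
    rw [Finset.mem_singleton] at hn
    subst hn
    rw [Finset.mem_union] at hn2
    rcases hn2 with h | h
    · rw [Finset.mem_Icc] at h; omega
    · exact hx0notimg h
  have hScard : S.card = L + k + 1 := by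
    rw [hSdef, Finset.card_union_of_disjoint hdisj2, Finset.card_union_of_disjoint hdisj1,
      Nat.card_Icc, Finset.card_image_of_injective _ hxfinj]
    simp
  have hx0S : x0 ∈ S := by
    rw [hSdef]; exact Finset.mem_union_right _ (Finset.mem_singleton_self _)
  have hxfS : ∀ i, xf i ∈ S := by
    intro i
    rw [hSdef]
    exact Finset.mem_union_left _ (Finset.mem_union_right _
      (Finset.mem_image_of_mem _ (Finset.mem_univ i)))
  have hiS : ∀ i : Fin L, (i.val + 1) ∈ S := by
    intro i
    rw [hSdef]
    refine Finset.mem_union_left _ (Finset.mem_union_left _ ?_)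
    rw [Finset.mem_Icc]
    omega
  -- the values
  set r : ℕ → ZMod p := fun n =>
    if h : ∃ i : Fin k, xf i = n then (a h.choose).eval ((n : ℕ) : ZMod p)
    else if hn : 1 ≤ n ∧ n ≤ L then ℓv ⟨n - 1, by omega⟩ else 0 with hrdef
  have hr1 : ∀ i : Fin k, r (xf i) = (a i).eval ((xf i : ℕ) : ZMod p) := by
    intro i
    have hex : ∃ i' : Fin k, xf i' = xf i := ⟨i, rfl⟩
    have : hex.choose = i := hxfinj hex.choose_spec
    rw [hrdef]
    simp only [dif_pos hex, this]
  have hr2 : ∀ i : Fin L, r (i.val + 1) = ℓv i := by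
    intro i
    have hnex : ¬ ∃ i' : Fin k, xf i' = i.val + 1 := by
      rintro ⟨i', hi'⟩
      have := hxfgtL i'
      omega
    have hin : 1 ≤ i.val + 1 ∧ i.val + 1 ≤ L := ⟨by omega, by omega⟩
    rw [hrdef]
    simp only [dif_neg hnex, dif_pos hin]
    congr 1
  have hr3 : r x0 = 0 := by
    have hnex : ¬ ∃ i' : Fin k, xf i' = x0 := by
      rintro ⟨i', hi'⟩; exact hxfx0 i' hi'
    rw [hrdef]
    simp only [dif_neg hnex, hx0def]
    rw [dif_neg (show ¬ ∃ i' : Fin k, xf i' = L + 1 from hnex)]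
    rw [dif_neg (show ¬(1 ≤ L + 1 ∧ L + 1 ≤ L) by omega)]
  -- the family of polynomials
  set f0 : Polynomial (ZMod p) := Lagrange.interpolate S (Nat.cast : ℕ → ZMod p) r with hf0def
  set hb : Polynomial (ZMod p) := Lagrange.basis S (Nat.cast : ℕ → ZMod p) x0 with hhbdef
  set F : ZMod p → Polynomial (ZMod p) := fun t => f0 + Polynomial.C t * hb with hFdef
  have hFnode : ∀ (t : ZMod p) (n : ℕ), n ∈ S → n ≠ x0 →
      (F t).eval ((n : ℕ) : ZMod p) = r n := by
    intro t n hn hnx0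
    rw [hFdef]
    simp only [Polynomial.eval_add, Polynomial.eval_mul, Polynomial.eval_C]
    rw [hf0def, Lagrange.eval_interpolate_at_node _ vInj hn, hhbdef,
      Lagrange.eval_basis_of_ne (Ne.symm hnx0) hn]
    ring
  have hFx0 : ∀ t : ZMod p, (F t).eval ((x0 : ℕ) : ZMod p) = t := by
    intro t
    rw [hFdef]
    simp only [Polynomial.eval_add, Polynomial.eval_mul, Polynomial.eval_C]
    rw [hf0def, Lagrange.eval_interpolate_at_node _ vInj hx0S, hr3, hhbdef,
      Lagrange.eval_basis_self vInj hx0S]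
    ring
  have hFdeg : ∀ t : ZMod p, (F t).natDegree ≤ L + k := by
    intro t
    have h1 : f0.natDegree ≤ L + k := by
      by_cases h : f0 = 0
      · simp [h]
      · have := Lagrange.degree_interpolate_lt (r := r) vInj
        rw [← hf0def, hScard] at this
        rw [← Polynomial.natDegree_lt_iff_degree_lt h] at this
        omega
    have h2 : hb.natDegree = L + k := by
      rw [hhbdef, Lagrange.natDegree_basis vInj hx0S, hScard]
      omega
    have h3 : (Polynomial.C t * hb).natDegree ≤ L + k := by
      refine (Polynomial.natDegree_C_mul_le _ _).trans (le_of_eq h2)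
    rw [hFdef]
    exact (Polynomial.natDegree_add_le _ _).trans (by omega)
  -- basis polynomial doesn't vanish off the nodes
  have hbne : ∀ x : ℕ, x ∈ I → x ∉ Finset.image xf Finset.univ →
      hb.eval ((x : ℕ) : ZMod p) ≠ 0 := by
    intro x hxI hximg
    have hxlt : x < p := hIlt x hxI
    rw [hhbdef, Lagrange.basis, Polynomial.eval_prod]
    rw [Finset.prod_ne_zero_iff]
    intro n hn
    have hnS : n ∈ S := Finset.mem_of_mem_erase hn
    have hnx0 : n ≠ x0 := Finset.ne_of_mem_erase hn
    have hnlt : n < p := lt_of_le_of_lt (hmemS n hnS) hpR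
    have hxn : x ≠ n := by
      intro h
      subst h
      rw [hSdef, Finset.mem_union, Finset.mem_union] at hnS
      rcases hnS with (h | h) | h
      · rw [Finset.mem_Icc] at h
        rw [hIdef, Finset.mem_Ioc] at hxI
        omega
      · exact hximg h
      · rw [Finset.mem_singleton] at h; exact hnx0 h
    have hx0n : (x0 : ZMod p) ≠ (n : ZMod p) := by
      intro h
      exact hnx0 (auxCastInj (lt_of_le_of_lt (hmemS x0 hx0S) hpR) hnlt h).symm
    have hxnc : ((x : ℕ) : ZMod p) ≠ ((n : ℕ) : ZMod p) := by
      intro h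
      exact hxn (auxCastInj hxlt hnlt h)
    rw [Lagrange.basisDivisor]
    simp only [Polynomial.eval_mul, Polynomial.eval_C, Polynomial.eval_sub, Polynomial.eval_X]
    exact mul_ne_zero (inv_ne_zero (sub_ne_zero_of_ne hx0n)) (sub_ne_zero_of_ne hxnc)
  -- the bad set of parameters
  set T : Finset (ZMod p) :=
    (Finset.image (fun i : Fin k => (a i).eval ((x0 : ℕ) : ZMod p)) Finset.univ) ∪
    (Finset.image (fun jx : Fin k × ℕ =>
        ((b jx.1).eval ((jx.2 : ℕ) : ZMod p) - f0.eval ((jx.2 : ℕ) : ZMod p)) *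
          (hb.eval ((jx.2 : ℕ) : ZMod p))⁻¹)
      (Finset.univ ×ˢ (I \ Finset.image xf Finset.univ))) with hTdef
  have hximgsub : Finset.image xf Finset.univ ⊆ I := by
    intro n hn
    obtain ⟨i, _, rfl⟩ := Finset.mem_image.mp hn
    exact hxfI i
  have hTcard : T.card ≤ (L + k) * k ^ 2 + 2 * k := by
    have h1 : (I \ Finset.image xf Finset.univ).card = (L + k) * k + 1 := by
      rw [Finset.card_sdiff_of_subset hximgsub, Finset.card_image_of_injective _ hxfinj, hIcard,
        Finset.card_univ, Fintype.card_fin]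
      omega
    refine (Finset.card_union_le _ _).trans ?_
    have h2 := Finset.card_image_le (s := (Finset.univ : Finset (Fin k)))
      (f := fun i : Fin k => (a i).eval ((x0 : ℕ) : ZMod p))
    have h3 := Finset.card_image_le
      (s := (Finset.univ : Finset (Fin k)) ×ˢ (I \ Finset.image xf Finset.univ))
      (f := fun jx : Fin k × ℕ =>
        ((b jx.1).eval ((jx.2 : ℕ) : ZMod p) - f0.eval ((jx.2 : ℕ) : ZMod p)) *
          (hb.eval ((jx.2 : ℕ) : ZMod p))⁻¹)
    rw [Finset.card_product, Finset.card_univ, Fintype.card_fin, h1] at h3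
    rw [Finset.card_univ, Fintype.card_fin] at h2
    have h4 : k * ((L + k) * k + 1) = (L + k) * k ^ 2 + k := by ring
    omega
  obtain ⟨t, ht⟩ : ∃ t : ZMod p, t ∉ T := by
    by_contra hcon
    push_neg at hcon
    have h1 : (Finset.univ : Finset (ZMod p)).card ≤ T.card :=
      Finset.card_le_card (fun x _ => hcon x)
    rw [Finset.card_univ, ZMod.card] at h1
    omega
  -- key: a collision with some b j off the chosen nodes forces t ∈ T
  have hkey : ∀ (j : Fin k) (x : ℕ), x ∈ I → x ∉ Finset.image xf Finset.univ →
      (F t).eval ((x : ℕ) : ZMod p) = (b j).eval ((x : ℕ) : ZMod p) → t ∈ T := by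
    intro j x hxI hximg heq
    have hne := hbne x hxI hximg
    have ht' : t = ((b j).eval ((x : ℕ) : ZMod p) - f0.eval ((x : ℕ) : ZMod p)) *
        (hb.eval ((x : ℕ) : ZMod p))⁻¹ := by
      rw [hFdef] at heq
      simp only [Polynomial.eval_add, Polynomial.eval_mul, Polynomial.eval_C] at heq
      field_simp
      linear_combination heq
    rw [hTdef]
    refine Finset.mem_union_right _ (Finset.mem_image.mpr ⟨(j, x), ?_, ht'.symm⟩)
    exact Finset.mem_product.mpr ⟨Finset.mem_univ _, Finset.mem_sdiff.mpr ⟨hxI, hximg⟩⟩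
  have hx0img : x0 ∉ Finset.image xf Finset.univ := hx0notimg
  -- f ≠ a i
  have hfa : ∀ i : Fin k, F t ≠ a i := by
    intro i heq
    apply ht
    rw [hTdef]
    refine Finset.mem_union_left _ (Finset.mem_image.mpr ⟨i, Finset.mem_univ _, ?_⟩)
    rw [← heq, hFx0 t]
  -- f ≠ b j
  have hfb : ∀ j : Fin k, F t ≠ b j := by
    intro j heq
    exact ht (hkey j x0 hx0I hx0img (by rw [heq]))
  refine ⟨F t, hFdeg t, hfa, hfb, ?_, ?_, ?_⟩
  · intro i
    rw [hFnode t (i.val + 1) (hiS i) (by have := i.isLt; omega), hr2 i]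
  · intro j
    refine ⟨hfa j, xf j, hxfgtL j, hxfleR j, ?_⟩
    rw [hFnode t (xf j) (hxfS j) (hxfx0 j), hr1 j]
  · intro j hadj
    obtain ⟨hne, x, hx1, hx2, heq⟩ := hadj
    have hxI : x ∈ I := by rw [hIdef, Finset.mem_Ioc]; exact ⟨hx1, hx2⟩
    by_cases hximg : x ∈ Finset.image xf Finset.univ
    · obtain ⟨i, _, rfl⟩ := Finset.mem_image.mp hximg
      rw [hFnode t (xf i) (hxfS i) (hxfx0 i), hr1 i] at heq
      exact hxfgood i j heq
    · exact ht (hkey j x hxI hximg heq)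
end
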